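/- arXiv:2112.09634 — 4 statements merged into one kernel-verified Lean document; each statement's English description precedes it below -/
import Mathlib

section
/- With u_i = u(·,λ_i) as in the mass matrix identity, the stiffness form satisfies ∫₀ᴸ (u_i' u_j' + p u_i u_j) dx = (λ_j F(λ_j) - λ_i F(λ_i))/(λ_j - λ_i) for λ_i ≠ λ_j. -/
/-!
Testing the equation for `uᵢ` against `uⱼ` and integrating `uᵢ'' uⱼ` by parts (the boundary
terms vanish by the Neumann conditions) gives the weak form `S + λᵢ M = F(λⱼ)`, where `M` is the
mass `∫ uᵢ uⱼ`; by symmetry of `S` and `M`, also `S + λⱼ M = F(λᵢ)`. Eliminating `M` between the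
two leaves `(λⱼ - λᵢ) S = λⱼ F(λⱼ) - λᵢ F(λᵢ)`.
-/

open intervalIntegral Set

noncomputable def stiffnessForm (p : ℝ → ℝ) (a b : ℝ) (u v : ℝ → ℝ) : ℝ :=
  ∫ x in a..b, (deriv u x * deriv v x + p x * u x * v x)

theorem stiffnessForm_comm (p : ℝ → ℝ) (a b : ℝ) (u v : ℝ → ℝ) :
    stiffnessForm p a b u v = stiffnessForm p a b v u := by
  unfold stiffnessForm
  congr 1
  ext x
  ring

theorem integral_deriv_deriv_mul_add_deriv_mul_deriv_eq_zero {a b : ℝ} {u v : ℝ → ℝ}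
    (hu : ContDiff ℝ 2 u) (hv : ContDiff ℝ 1 v) (ha : deriv u a = 0) (hb : deriv u b = 0) :
    ∫ x in a..b, (deriv (deriv u) x * v x + deriv u x * deriv v x) = 0 := by
  have hu' : ContDiff ℝ 1 (deriv u) := (contDiff_succ_iff_deriv (n := 1)).mp hu |>.2.2
  rw [integral_deriv_mul_eq_sub
    (fun x _ => (hu'.differentiable one_ne_zero x).hasDerivAt)
    (fun x _ => (hv.differentiable one_ne_zero x).hasDerivAt)
    ((hu'.continuous_deriv le_rfl).intervalIntegrable _ _)
    ((hv.continuous_deriv le_rfl).intervalIntegrable _ _), ha, hb]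
  ring

theorem stiffnessForm_add_mul_integral_mul_eq_integral {p g : ℝ → ℝ} {a b lam : ℝ}
    {u v : ℝ → ℝ} (hab : a ≤ b) (hp : ContinuousOn p (Icc a b))
    (hu : ContDiff ℝ 2 u) (hv : ContDiff ℝ 1 v)
    (heq : ∀ x ∈ Icc a b, -(deriv (deriv u) x) + p x * u x + lam * u x = g x)
    (ha : deriv u a = 0) (hb : deriv u b = 0) :
    stiffnessForm p a b u v + lam * ∫ x in a..b, u x * v x = ∫ x in a..b, g x * v x := by
  have hIcc : uIcc a b = Icc a b := uIcc_of_le hab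
  have hu1 : Continuous (deriv u) := hu.continuous_deriv one_le_two
  have hu2 : Continuous (deriv (deriv u)) :=
    ((contDiff_succ_iff_deriv (n := 1)).mp hu).2.2.continuous_deriv le_rfl
  have hv1 : Continuous (deriv v) := hv.continuous_deriv le_rfl
  have hS : IntervalIntegrable (fun x => deriv u x * deriv v x + p x * u x * v x)
      MeasureTheory.volume a b := by
    refine ContinuousOn.intervalIntegrable ?_
    rw [hIcc]
    exact (hu1.mul hv1).continuousOn.add
      ((hp.mul hu.continuous.continuousOn).mul hv.continuous.continuousOn)
  have hM : IntervalIntegrable (fun x => lam * (u x * v x)) MeasureTheory.volume a b :=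
    (continuous_const.mul (hu.continuous.mul hv.continuous)).intervalIntegrable _ _
  have hparts : IntervalIntegrable
      (fun x => deriv (deriv u) x * v x + deriv u x * deriv v x) MeasureTheory.volume a b :=
    ((hu2.mul hv.continuous).add (hu1.mul hv1)).intervalIntegrable _ _
  calc stiffnessForm p a b u v + lam * ∫ x in a..b, u x * v x
      = ∫ x in a..b, (deriv u x * deriv v x + p x * u x * v x + lam * (u x * v x)) := by
        rw [stiffnessForm, ← integral_const_mul, integral_add hS hM]
    _ = ∫ x in a..b, (deriv u x * deriv v x + p x * u x * v x + lam * (u x * v x)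
          - (deriv (deriv u) x * v x + deriv u x * deriv v x)) := by
        rw [integral_sub (hS.add hM) hparts,
          integral_deriv_deriv_mul_add_deriv_mul_deriv_eq_zero hu hv ha hb, sub_zero]
    _ = ∫ x in a..b, g x * v x := by
        refine integral_congr fun x hx => ?_
        rw [hIcc] at hx
        simp only [← heq x hx]
        ring

theorem stiffness_matrix_offdiagonal_general
    (L : ℝ) (hL : 0 < L) (p g : ℝ → ℝ)
    (hp : ContinuousOn p (Icc 0 L))
    (lami lamj : ℝ) (hij : lami ≠ lamj)
    (ui uj : ℝ → ℝ) (hui : ContDiff ℝ 2 ui) (huj : ContDiff ℝ 2 uj)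
    (heqi : ∀ x ∈ Icc 0 L, -(deriv (deriv ui) x) + p x * ui x + lami * ui x = g x)
    (heqj : ∀ x ∈ Icc 0 L, -(deriv (deriv uj) x) + p x * uj x + lamj * uj x = g x)
    (hbci0 : deriv ui 0 = 0) (hbciL : deriv ui L = 0)
    (hbcj0 : deriv uj 0 = 0) (hbcjL : deriv uj L = 0) :
    ∫ x in (0:ℝ)..L, (deriv ui x * deriv uj x + p x * ui x * uj x) =
      (lamj * (∫ x in (0:ℝ)..L, g x * uj x) - lami * ∫ x in (0:ℝ)..L, g x * ui x) /
        (lamj - lami) := by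
  have weak_i := stiffnessForm_add_mul_integral_mul_eq_integral hL.le hp hui
    (huj.of_le one_le_two) heqi hbci0 hbciL
  have weak_j := stiffnessForm_add_mul_integral_mul_eq_integral hL.le hp huj
    (hui.of_le one_le_two) heqj hbcj0 hbcjL
  rw [stiffnessForm_comm] at weak_j
  simp only [mul_comm (uj _) (ui _)] at weak_j
  rw [eq_div_iff (sub_ne_zero.mpr hij.symm)]
  change stiffnessForm p 0 L ui uj * _ = _
  linear_combination lamj * weak_i - lami * weak_j

/-- Off-diagonal stiffness matrix identity:
`∫₀ᴸ (uᵢ' uⱼ' + p uᵢ uⱼ) = (λⱼ F(λⱼ) - λᵢ F(λᵢ))/(λⱼ - λᵢ)` where `F(λ) = ∫₀ᴸ g u(·,λ)`. -/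
theorem stiffness_matrix_offdiagonal
    (L : ℝ) (hL : 0 < L) (p g : ℝ → ℝ)
    (hp : ContinuousOn p (Icc 0 L)) (hp0 : ∀ x ∈ Icc 0 L, 0 ≤ p x)
    (hg : Continuous g)
    (lami lamj : ℝ) (hlami : 0 < lami) (hlamj : 0 < lamj) (hij : lami ≠ lamj)
    (ui uj : ℝ → ℝ) (hui : ContDiff ℝ 2 ui) (huj : ContDiff ℝ 2 uj)
    (heqi : ∀ x ∈ Icc 0 L, -(deriv (deriv ui) x) + p x * ui x + lami * ui x = g x)
    (heqj : ∀ x ∈ Icc 0 L, -(deriv (deriv uj) x) + p x * uj x + lamj * uj x = g x)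
    (hbci0 : deriv ui 0 = 0) (hbciL : deriv ui L = 0)
    (hbcj0 : deriv uj 0 = 0) (hbcjL : deriv uj L = 0) :
    ∫ x in (0:ℝ)..L, (deriv ui x * deriv uj x + p x * ui x * uj x) =
      (lamj * (∫ x in (0:ℝ)..L, g x * uj x) - lami * ∫ x in (0:ℝ)..L, g x * ui x) /
        (lamj - lami) :=
  stiffness_matrix_offdiagonal_general L hL p g hp lami lamj hij ui uj hui huj heqi heqj hbci0 hbciL
    hbcj0 hbcjL
end

section
/- Differentiating the transfer function: dF/dλ(λ) = -∫₀ᴸ u(x,λ)² dx, i.e., the diagonal mass matrix entry M_{ii} = ⟨u_i,u_i⟩ obeys M_{ii} = -F'(λ_i). -/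
/-!
Subtracting `v` times the equation for `u = u(·,λ₀)` from `u` times the differentiated equation
gives `g v = (u v'' - v u'') - u²` pointwise, since the terms `(p + λ₀) u v` cancel. The
Wronskian term `u v'' - v u''` is the derivative of `u v' - v u'`, which vanishes at both
endpoints by the Neumann conditions, so `F'(λ₀) = ∫ g v = -∫ u²`.
-/

open intervalIntegral Set

theorem ContDiff.continuous_deriv_deriv {f : ℝ → ℝ} (hf : ContDiff ℝ 2 f) :
    Continuous (deriv (deriv f)) := by
  simpa only [iteratedDeriv_succ, iteratedDeriv_zero] using hf.continuous_iteratedDeriv 2 le_rfl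

theorem integral_mul_deriv_deriv_sub_mul_deriv_deriv {f w : ℝ → ℝ}
    (hf : ContDiff ℝ 2 f) (hw : ContDiff ℝ 2 w) (a b : ℝ) :
    ∫ x in a..b, (f x * deriv (deriv w) x - w x * deriv (deriv f) x) =
      (f b * deriv w b - w b * deriv f b) - (f a * deriv w a - w a * deriv f a) := by
  refine integral_eq_sub_of_hasDerivAt (f := fun x => f x * deriv w x - w x * deriv f x)
    (fun x _ => ?_) ?_
  · have hd := ((hf.differentiable two_ne_zero x).hasDerivAt.mul
      (hw.differentiable_deriv_two x).hasDerivAt).sub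
      ((hw.differentiable two_ne_zero x).hasDerivAt.mul (hf.differentiable_deriv_two x).hasDerivAt)
    exact hd.congr_deriv (by ring)
  · exact ((hf.continuous.mul hw.continuous_deriv_deriv).sub
      (hw.continuous.mul hf.continuous_deriv_deriv)).intervalIntegrable a b

theorem transfer_function_derivative_general
    (L : ℝ) (hL : 0 < L) (p g : ℝ → ℝ)
    (lam0 : ℝ) (hlam0 : 0 < lam0)
    (u : ℝ → ℝ → ℝ) (v : ℝ → ℝ)
    (hu : ∀ mu > (0:ℝ), ContDiff ℝ 2 (u mu)) (hv : ContDiff ℝ 2 v)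
    (heq : ∀ mu > (0:ℝ), ∀ x ∈ Icc 0 L,
      -(deriv (deriv (u mu)) x) + p x * u mu x + mu * u mu x = g x)
    (hbc0 : ∀ mu > (0:ℝ), deriv (u mu) 0 = 0) (hbcL : ∀ mu > (0:ℝ), deriv (u mu) L = 0)
    -- the differentiated equation `-v'' + p v + λ₀ v = -u(·,λ₀)` with Neumann conditions:
    (heqv : ∀ x ∈ Icc 0 L,
      -(deriv (deriv v) x) + p x * v x + lam0 * v x = -(u lam0 x))
    (hbcv0 : deriv v 0 = 0) (hbcvL : deriv v L = 0)
    -- differentiation under the integral sign: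
    (hswap : HasDerivAt (fun mu => ∫ x in (0:ℝ)..L, g x * u mu x)
      (∫ x in (0:ℝ)..L, g x * v x) lam0) :
    HasDerivAt (fun mu => ∫ x in (0:ℝ)..L, g x * u mu x)
      (-∫ x in (0:ℝ)..L, (u lam0 x) ^ 2) lam0 := by
  set f := u lam0
  have hf : ContDiff ℝ 2 f := hu lam0 hlam0
  have hgv : EqOn (fun x => g x * v x)
      (fun x => (f x * deriv (deriv v) x - v x * deriv (deriv f) x) - f x ^ 2) (uIcc 0 L) := by
    intro x hx
    rw [uIcc_of_le hL.le] at hx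
    linear_combination (-v x) * heq lam0 hlam0 x hx + f x * heqv x hx
  have hwronskian : IntervalIntegrable
      (fun x => f x * deriv (deriv v) x - v x * deriv (deriv f) x) MeasureTheory.volume 0 L :=
    ((hf.continuous.mul hv.continuous_deriv_deriv).sub
      (hv.continuous.mul hf.continuous_deriv_deriv)).intervalIntegrable 0 L
  have hF' : ∫ x in (0:ℝ)..L, g x * v x = -∫ x in (0:ℝ)..L, f x ^ 2 := by
    rw [integral_congr hgv,
      integral_sub (g := fun x => f x ^ 2) hwronskian
        ((hf.continuous.pow 2).intervalIntegrable 0 L),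
      integral_mul_deriv_deriv_sub_mul_deriv_deriv hf hv, hbc0 lam0 hlam0, hbcL lam0 hlam0,
      hbcv0, hbcvL]
    ring
  exact hF' ▸ hswap

/-- Derivative of the transfer function: `F'(λ₀) = -∫₀ᴸ u(x,λ₀)² dx`, i.e. the diagonal
mass matrix entry `Mᵢᵢ = ⟨uᵢ,uᵢ⟩` equals `-F'(λᵢ)`.  Here `v = ∂u/∂λ` solves the
differentiated equation and differentiation under the integral sign is assumed. -/
theorem transfer_function_derivative
    (L : ℝ) (hL : 0 < L) (p g : ℝ → ℝ)
    (hp : ContinuousOn p (Icc 0 L)) (hp0 : ∀ x ∈ Icc 0 L, 0 ≤ p x)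
    (hg : Continuous g)
    (lam0 : ℝ) (hlam0 : 0 < lam0)
    (u : ℝ → ℝ → ℝ) (v : ℝ → ℝ)
    (hu : ∀ mu > (0:ℝ), ContDiff ℝ 2 (u mu)) (hv : ContDiff ℝ 2 v)
    (heq : ∀ mu > (0:ℝ), ∀ x ∈ Icc 0 L,
      -(deriv (deriv (u mu)) x) + p x * u mu x + mu * u mu x = g x)
    (hbc0 : ∀ mu > (0:ℝ), deriv (u mu) 0 = 0) (hbcL : ∀ mu > (0:ℝ), deriv (u mu) L = 0)
    -- `v = ∂u/∂λ` at `λ₀`: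
    (hdu : ∀ x ∈ Icc 0 L, HasDerivAt (fun mu => u mu x) (v x) lam0)
    -- the differentiated equation `-v'' + p v + λ₀ v = -u(·,λ₀)` with Neumann conditions:
    (heqv : ∀ x ∈ Icc 0 L,
      -(deriv (deriv v) x) + p x * v x + lam0 * v x = -(u lam0 x))
    (hbcv0 : deriv v 0 = 0) (hbcvL : deriv v L = 0)
    -- differentiation under the integral sign:
    (hswap : HasDerivAt (fun mu => ∫ x in (0:ℝ)..L, g x * u mu x)
      (∫ x in (0:ℝ)..L, g x * v x) lam0) :
    HasDerivAt (fun mu => ∫ x in (0:ℝ)..L, g x * u mu x)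
      (-∫ x in (0:ℝ)..L, (u lam0 x) ^ 2) lam0 :=
  transfer_function_derivative_general L hL p g lam0 hlam0 u v hu hv heq hbc0 hbcL heqv hbcv0 hbcvL
    hswap
end

section
/- The diagonal stiffness entry satisfies S_{ii} = d(λF)/dλ evaluated at λ_i, i.e., ∫₀ᴸ ((u_i')² + p u_i²) dx = F(λ_i) + λ_i F'(λ_i) + 2λ_i ∫₀ᴸ u_i ∂_λ u(·,λ_i) dx combined with the equation reduces to S_{ii} = F(λ_i) + λ_i F'(λ_i). -/
/-!
Write `w = u(·, λᵢ)` and `q = p + λᵢ`. Testing `-φ'' + qφ = h` (Neumann) against `f` and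
integrating by parts gives `∫ h f = ∫ (f'φ' + q f φ)`, a form symmetric in `f` and `φ`. With
`(φ, h) = (w, g)` and `f = w` this is `F(λᵢ) = Sᵢᵢ + λᵢ ∫ w²`; with `f = v` and, symmetrically,
`(φ, h) = (v, -w)`, `f = w` it gives `F'(λᵢ) = ∫ g v = -∫ w²`. Eliminating `∫ w²` yields
`Sᵢᵢ = F(λᵢ) + λᵢ F'(λᵢ)`.
-/

open intervalIntegral Set

theorem integral_mul_deriv_deriv_of_neumann {a b : ℝ} {f φ : ℝ → ℝ}
    (hf : ContDiff ℝ 1 f) (hφ : ContDiff ℝ 2 φ) (ha : deriv φ a = 0) (hb : deriv φ b = 0) :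
    ∫ x in a..b, f x * deriv (deriv φ) x = -∫ x in a..b, deriv f x * deriv φ x := by
  have hφ' : ContDiff ℝ 1 (deriv φ) := hφ.deriv'
  rw [integral_mul_deriv_eq_deriv_mul
    (fun x _ => (hf.differentiable one_ne_zero x).hasDerivAt)
    (fun x _ => (hφ'.differentiable one_ne_zero x).hasDerivAt)
    ((hf.continuous_deriv le_rfl).intervalIntegrable _ _)
    ((hφ'.continuous_deriv le_rfl).intervalIntegrable _ _), ha, hb]
  ring

theorem integral_mul_eq_of_neumann {a b : ℝ} {f φ q h : ℝ → ℝ}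
    (hf : ContDiff ℝ 1 f) (hφ : ContDiff ℝ 2 φ) (hq : ContinuousOn q (uIcc a b))
    (heq : ∀ x ∈ uIcc a b, -deriv (deriv φ) x + q x * φ x = h x)
    (ha : deriv φ a = 0) (hb : deriv φ b = 0) :
    ∫ x in a..b, h x * f x = ∫ x in a..b, (deriv f x * deriv φ x + q x * (f x * φ x)) := by
  have hqfφ : IntervalIntegrable (fun x => q x * (f x * φ x)) MeasureTheory.volume a b :=
    (hq.mul (hf.continuous.mul hφ.continuous).continuousOn).intervalIntegrable
  have hfφ'' : IntervalIntegrable (fun x => f x * deriv (deriv φ) x) MeasureTheory.volume a b :=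
    (hf.continuous.mul (hφ.deriv'.continuous_deriv le_rfl)).intervalIntegrable _ _
  have hf'φ' : IntervalIntegrable (fun x => deriv f x * deriv φ x) MeasureTheory.volume a b :=
    ((hf.continuous_deriv le_rfl).mul (hφ.continuous_deriv (by norm_num))).intervalIntegrable _ _
  calc ∫ x in a..b, h x * f x
      = ∫ x in a..b, (q x * (f x * φ x) - f x * deriv (deriv φ) x) :=
        integral_congr fun x hx => by rw [← heq x hx]; ring
    _ = (∫ x in a..b, q x * (f x * φ x)) - ∫ x in a..b, f x * deriv (deriv φ) x :=
        integral_sub hqfφ hfφ''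
    _ = ∫ x in a..b, (deriv f x * deriv φ x + q x * (f x * φ x)) := by
        rw [integral_mul_deriv_deriv_of_neumann hf hφ ha hb, sub_neg_eq_add, add_comm,
          integral_add hf'φ' hqfφ]

theorem stiffness_matrix_diagonal_general
    (L : ℝ) (hL : 0 < L) (p g : ℝ → ℝ)
    (hp : ContinuousOn p (Icc 0 L))
    (lami : ℝ) (hlami : 0 < lami)
    (u : ℝ → ℝ → ℝ) (v : ℝ → ℝ)
    (hu : ∀ mu > (0:ℝ), ContDiff ℝ 2 (u mu)) (hv : ContDiff ℝ 2 v)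
    (heq : ∀ mu > (0:ℝ), ∀ x ∈ Icc 0 L,
      -(deriv (deriv (u mu)) x) + p x * u mu x + mu * u mu x = g x)
    (hbc0 : ∀ mu > (0:ℝ), deriv (u mu) 0 = 0) (hbcL : ∀ mu > (0:ℝ), deriv (u mu) L = 0)
    -- the differentiated equation `-v'' + p v + λᵢ v = -u(·,λᵢ)` with Neumann conditions:
    (heqv : ∀ x ∈ Icc 0 L,
      -(deriv (deriv v) x) + p x * v x + lami * v x = -(u lami x))
    (hbcv0 : deriv v 0 = 0) (hbcvL : deriv v L = 0)
    -- differentiation under the integral sign: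
    (hswap : HasDerivAt (fun mu => ∫ x in (0:ℝ)..L, g x * u mu x)
      (∫ x in (0:ℝ)..L, g x * v x) lami) :
    ∫ x in (0:ℝ)..L, ((deriv (u lami) x) ^ 2 + p x * (u lami x) ^ 2) =
      (∫ x in (0:ℝ)..L, g x * u lami x) +
        lami * deriv (fun mu => ∫ x in (0:ℝ)..L, g x * u mu x) lami := by
  have hw := hu lami hlami
  set w := u lami
  rw [← uIcc_of_le hL.le] at hp heq heqv
  have hq : ContinuousOn (fun x => p x + lami) (uIcc 0 L) := hp.add continuousOn_const
  have hF := integral_mul_eq_of_neumann (h := g) (hw.of_le (by norm_num)) hw hq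
    (fun x hx => by linear_combination heq lami hlami x hx) (hbc0 lami hlami) (hbcL lami hlami)
  have hgv := integral_mul_eq_of_neumann (h := g) (hv.of_le (by norm_num)) hw hq
    (fun x hx => by linear_combination heq lami hlami x hx) (hbc0 lami hlami) (hbcL lami hlami)
  have hww := integral_mul_eq_of_neumann (h := fun x => -w x) (hw.of_le (by norm_num)) hv hq
    (fun x hx => by linear_combination heqv x hx) hbcv0 hbcvL
  have hF_deriv : (∫ x in (0:ℝ)..L, g x * v x) = -∫ x in (0:ℝ)..L, w x * w x := by
    calc ∫ x in (0:ℝ)..L, g x * v x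
        = ∫ x in (0:ℝ)..L, (deriv w x * deriv v x + (p x + lami) * (w x * v x)) := by
          rw [hgv]; exact integral_congr fun x _ => by ring
      _ = -∫ x in (0:ℝ)..L, w x * w x := by simp only [← hww, neg_mul, integral_neg]
  rw [hswap.deriv, hF_deriv, hF, mul_neg, ← integral_const_mul, ← sub_eq_add_neg, ← integral_sub]
  · exact integral_congr fun x _ => by ring
  · have hw' := hw.continuous_deriv (by norm_num)
    exact ((hw'.mul hw').continuousOn.add
      (hq.mul (hw.continuous.mul hw.continuous).continuousOn)).intervalIntegrable
  · exact (continuous_const.mul (hw.continuous.mul hw.continuous)).intervalIntegrable _ _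

/-- Diagonal stiffness entry: `Sᵢᵢ = ∫₀ᴸ ((uᵢ')² + p uᵢ²) = F(λᵢ) + λᵢ F'(λᵢ)`,
i.e. `Sᵢᵢ = d(λF)/dλ` at `λᵢ`. -/
theorem stiffness_matrix_diagonal
    (L : ℝ) (hL : 0 < L) (p g : ℝ → ℝ)
    (hp : ContinuousOn p (Icc 0 L)) (hp0 : ∀ x ∈ Icc 0 L, 0 ≤ p x)
    (hg : Continuous g)
    (lami : ℝ) (hlami : 0 < lami)
    (u : ℝ → ℝ → ℝ) (v : ℝ → ℝ)
    (hu : ∀ mu > (0:ℝ), ContDiff ℝ 2 (u mu)) (hv : ContDiff ℝ 2 v)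
    (heq : ∀ mu > (0:ℝ), ∀ x ∈ Icc 0 L,
      -(deriv (deriv (u mu)) x) + p x * u mu x + mu * u mu x = g x)
    (hbc0 : ∀ mu > (0:ℝ), deriv (u mu) 0 = 0) (hbcL : ∀ mu > (0:ℝ), deriv (u mu) L = 0)
    -- `v = ∂u/∂λ` at `λᵢ`:
    (hdu : ∀ x ∈ Icc 0 L, HasDerivAt (fun mu => u mu x) (v x) lami)
    -- the differentiated equation `-v'' + p v + λᵢ v = -u(·,λᵢ)` with Neumann conditions:
    (heqv : ∀ x ∈ Icc 0 L,
      -(deriv (deriv v) x) + p x * v x + lami * v x = -(u lami x))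
    (hbcv0 : deriv v 0 = 0) (hbcvL : deriv v L = 0)
    -- differentiation under the integral sign:
    (hswap : HasDerivAt (fun mu => ∫ x in (0:ℝ)..L, g x * u mu x)
      (∫ x in (0:ℝ)..L, g x * v x) lami) :
    ∫ x in (0:ℝ)..L, ((deriv (u lami) x) ^ 2 + p x * (u lami x) ^ 2) =
      (∫ x in (0:ℝ)..L, g x * u lami x) +
        lami * deriv (fun mu => ∫ x in (0:ℝ)..L, g x * u mu x) lami :=
  stiffness_matrix_diagonal_general L hL p g hp lami hlami u v hu hv heq hbc0 hbcL heqv hbcv0 hbcvL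
    hswap
end

section
/- Under the same orthonormalization, the transfer function admits the representation bᵀ(S+λM)^{-1}b = (bᵀM^{-1}b) · e₁ᵀ(T+λI)^{-1}e₁. -/
/-!
With `e = e₁`, the inverse of the congruence `Qᵀ (S + λM) Q = T + λI` gives
`eᵀ(T+λI)⁻¹e = uᵀ(S+λM)⁻¹u` for `u = (Qᵀ)⁻¹e = MQe`, and `u = b/√β` with `β = bᵀM⁻¹b`.
The factor `β` is recovered from `M`-orthonormality of the first column `Qe`:
`1 = (Qe)ᵀM(Qe) = β/(√β)²`.
-/

open scoped Matrix

namespace Matrix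

variable {ι R : Type*} [Fintype ι] [DecidableEq ι] [CommRing R] {M Q : Matrix ι ι R}

theorem isUnit_det_of_transpose_mul_mul_eq_one (hQ : Qᵀ * M * Q = 1) : IsUnit M.det := by
  have h : Qᵀ.det * M.det * Q.det = 1 := by rw [← det_mul, ← det_mul, hQ, det_one]
  exact IsUnit.of_mul_eq_one (Qᵀ.det * Q.det) (by linear_combination h)

theorem inv_transpose_eq_of_transpose_mul_mul_eq_one (hQ : Qᵀ * M * Q = 1) :
    (Qᵀ)⁻¹ = M * Q :=
  inv_eq_right_inv (by rw [← Matrix.mul_assoc, hQ])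

theorem dotProduct_mulVec_inv_transpose_mul_mul (hQ : Qᵀ * M * Q = 1)
    (A : Matrix ι ι R) (v : ι → R) :
    v ⬝ᵥ ((Qᵀ * A * Q)⁻¹ *ᵥ v) = (M *ᵥ Q *ᵥ v) ⬝ᵥ (A⁻¹ *ᵥ (M *ᵥ Q *ᵥ v)) := by
  have hQinv : Q⁻¹ = (M * Q)ᵀ := by
    rw [← inv_transpose_eq_of_transpose_mul_mul_eq_one hQ, transpose_nonsing_inv, transpose_transpose]
  rw [mul_inv_rev, mul_inv_rev, inv_transpose_eq_of_transpose_mul_mul_eq_one hQ, hQinv,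
    ← mulVec_mulVec, ← mulVec_mulVec, dotProduct_mulVec, vecMul_transpose]
  simp only [← mulVec_mulVec]

theorem dotProduct_mulVec_eq_of_transpose_mul_mul_eq_one (hQ : Qᵀ * M * Q = 1) (v : ι → R) :
    (Q *ᵥ v) ⬝ᵥ (M *ᵥ Q *ᵥ v) = v ⬝ᵥ v := by
  rw [mulVec_mulVec, ← vecMul_transpose Q v, ← dotProduct_mulVec, mulVec_mulVec,
    ← Matrix.mul_assoc, hQ, one_mulVec]

end Matrix

open Matrix

theorem lanczos_transfer_representation_general
    (n : ℕ) (S M Q T : Matrix (Fin (n+1)) (Fin (n+1)) ℝ)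
    (b : Fin (n+1) → ℝ)
    (lam : ℝ)
    (hQ : Qᵀ * M * Q = 1)
    (hq1 : ∀ i, Q i 0 = (M⁻¹ *ᵥ b) i / Real.sqrt (b ⬝ᵥ (M⁻¹ *ᵥ b)))
    (hT : T = Qᵀ * S * Q) :
    b ⬝ᵥ ((S + lam • M)⁻¹ *ᵥ b) =
      (b ⬝ᵥ (M⁻¹ *ᵥ b)) *
        (Pi.single (0 : Fin (n+1)) (1:ℝ) ⬝ᵥ
          ((T + lam • (1 : Matrix (Fin (n+1)) (Fin (n+1)) ℝ))⁻¹ *ᵥ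
            Pi.single 0 1)) := by
  set e : Fin (n+1) → ℝ := Pi.single 0 1
  set β := b ⬝ᵥ (M⁻¹ *ᵥ b)
  set c := (Real.sqrt β)⁻¹
  have hQe : Q *ᵥ e = c • (M⁻¹ *ᵥ b) := by
    ext i
    simp [e, c, mulVec_single, hq1 i, div_eq_inv_mul]
  have hMQe : M *ᵥ Q *ᵥ e = c • b := by
    rw [hQe, mulVec_smul, mulVec_mulVec,
      mul_nonsing_inv _ (isUnit_det_of_transpose_mul_mul_eq_one hQ), one_mulVec]
  have hnormalized : c * c * β = 1 := by
    have h := dotProduct_mulVec_eq_of_transpose_mul_mul_eq_one hQ e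
    rw [hMQe, hQe, smul_dotProduct, dotProduct_smul, dotProduct_comm] at h
    simpa [e, β, mul_assoc] using h
  have hcong : T + lam • 1 = Qᵀ * (S + lam • M) * Q := by
    rw [hT, Matrix.mul_add, Matrix.add_mul, Matrix.mul_smul, Matrix.smul_mul, hQ]
  rw [hcong, dotProduct_mulVec_inv_transpose_mul_mul hQ, hMQe, mulVec_smul, smul_dotProduct,
    dotProduct_smul, smul_eq_mul, smul_eq_mul]
  linear_combination (-(b ⬝ᵥ ((S + lam • M)⁻¹ *ᵥ b))) * hnormalized

/-- After the `M`-orthonormal change of basis `Q` with first column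
`q₁ = M⁻¹b/√(bᵀM⁻¹b)`, the transfer function admits the representation
`bᵀ(S+λM)⁻¹b = (bᵀM⁻¹b) · e₁ᵀ(T+λI)⁻¹e₁`, where `T = QᵀSQ`. -/
theorem lanczos_transfer_representation
    (n : ℕ) (S M Q T : Matrix (Fin (n+1)) (Fin (n+1)) ℝ)
    (b : Fin (n+1) → ℝ) (hb : b ≠ 0)
    (lam : ℝ)
    (hS : S.IsSymm) (hM : M.PosDef)
    (hinv : IsUnit (S + lam • M).det)
    (hQ : Qᵀ * M * Q = 1)
    (hq1 : ∀ i, Q i 0 = (M⁻¹ *ᵥ b) i / Real.sqrt (b ⬝ᵥ (M⁻¹ *ᵥ b)))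
    (hT : T = Qᵀ * S * Q) :
    b ⬝ᵥ ((S + lam • M)⁻¹ *ᵥ b) =
      (b ⬝ᵥ (M⁻¹ *ᵥ b)) *
        (Pi.single (0 : Fin (n+1)) (1:ℝ) ⬝ᵥ
          ((T + lam • (1 : Matrix (Fin (n+1)) (Fin (n+1)) ℝ))⁻¹ *ᵥ
            Pi.single 0 1)) :=
  lanczos_transfer_representation_general n S M Q T b lam hQ hq1 hT
end
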